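/- Let ρ : [0,∞) → [0,∞) be continuous, non-decreasing, concave with ρ(0)=0, ρ(r)>0 for r>0, and ∫_{0+} dr/ρ(r) = ∞. Let P > 0 and let (u_m)_{m≥0} be uniformly bounded nonnegative measurable functions on [0,T] satisfying u_m(t) ≤ P·∫_t^T ρ(u_{m−1}(s)) ds for all m ≥ 1, t ∈ [0,T]. Then α(t) := limsup_{m→∞} u_m(t) satisfies α(t) ≤ P·∫_t^T ρ(α(s)) ds, and consequently lim_{m→∞} sup over the sequence gives α(t) = 0 for all t ∈ [0,T]. -/

import Mathlib

/-!
Passing to the limsup in `u (m + 1) ≤ P ∫ ρ (u m)` is the reverse Fatou lemma for the uniformly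
bounded functions `P ρ (u m)`, together with `limsup (ρ ∘ u m) = ρ (limsup u m)` for continuous
monotone `ρ`. For the backward Bihari inequality, replace `α` by the continuous majorant
`g t = P ∫_t^T ρ (α s) ds`, which satisfies the same inequality, and then `g` by the `C¹` majorant
`z t = P ∫_t^T ρ (g s) ds`, for which `-z' ≤ P ρ (z)`. If `z t₀ = c > 0`, the substitution
`r = z t + ε` gives `∫_ε^c dr / ρ r ≤ P (T - t₀)` for every `ε > 0`, so `1 / ρ` would be integrable
near `0`.
-/

open Set MeasureTheory Filter Topology

theorem Filter.limsup_mem_Icc {x : ℕ → ℝ} {c d : ℝ} (h : ∀ n, x n ∈ Icc c d) :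
    limsup x atTop ∈ Icc c d :=
  ⟨le_limsup_of_frequently_le (.of_forall fun n => (h n).1)
      (isBoundedUnder_of ⟨d, fun n => (h n).2⟩),
    limsup_le_of_le (isCoboundedUnder_le_of_le atTop fun n => (h n).1)
      (.of_forall fun n => (h n).2)⟩

theorem MeasureTheory.limsup_integral_le_integral_limsup {α : Type*} [MeasurableSpace α]
    {μ : Measure α} [IsFiniteMeasure μ] {f : ℕ → α → ℝ} {C : ℝ} (hf : ∀ n, Measurable (f n))
    (hbdd : ∀ n, ∀ᵐ x ∂μ, f n x ∈ Icc 0 C) :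
    limsup (fun n => ∫ x, f n x ∂μ) atTop ≤ ∫ x, limsup (fun n => f n x) atTop ∂μ := by
  have hbdd' : ∀ᵐ x ∂μ, ∀ n, f n x ∈ Icc 0 C := ae_all_iff.2 hbdd
  have hC : ∫⁻ _, ENNReal.ofReal C ∂μ ≠ ⊤ := by simp [lintegral_const, ENNReal.mul_ne_top]
  have hlim : ∀ᵐ x ∂μ, ENNReal.ofReal (limsup (fun n => f n x) atTop) =
      limsup (fun n => ENNReal.ofReal (f n x)) atTop := by
    filter_upwards [hbdd'] with x hx
    exact ENNReal.ofReal_mono.map_limsup_of_continuousAt _ ENNReal.continuous_ofReal.continuousAt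
      (isBoundedUnder_of ⟨C, fun n => (hx n).2⟩)
      (isCoboundedUnder_le_of_le atTop fun n => (hx n).1)
  have hlim_le : ∫⁻ x, ENNReal.ofReal (limsup (fun n => f n x) atTop) ∂μ ≤
      ∫⁻ _, ENNReal.ofReal C ∂μ := by
    refine lintegral_mono_ae ?_
    filter_upwards [hbdd'] with x hx
    exact ENNReal.ofReal_le_ofReal (limsup_mem_Icc hx).2
  have hint_le : ∀ n, ∫⁻ x, ENNReal.ofReal (f n x) ∂μ ≤ ∫⁻ _, ENNReal.ofReal C ∂μ := fun n =>
    lintegral_mono_ae ((hbdd n).mono fun x hx => ENNReal.ofReal_le_ofReal hx.2)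
  calc limsup (fun n => ∫ x, f n x ∂μ) atTop
      = limsup (fun n => (∫⁻ x, ENNReal.ofReal (f n x) ∂μ).toReal) atTop := by
        congr! 2 with n
        exact integral_eq_lintegral_of_nonneg_ae ((hbdd n).mono fun x hx => hx.1)
          (hf n).aestronglyMeasurable
    _ = (limsup (fun n => ∫⁻ x, ENNReal.ofReal (f n x) ∂μ) atTop).toReal :=
        ENNReal.limsup_toReal_eq hC (.of_forall hint_le)
    _ ≤ (∫⁻ x, ENNReal.ofReal (limsup (fun n => f n x) atTop) ∂μ).toReal := by
        refine ENNReal.toReal_mono (ne_top_of_le_ne_top hC hlim_le) ?_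
        rw [lintegral_congr_ae hlim]
        exact limsup_lintegral_le _ (fun n => (hf n).ennreal_ofReal)
          (fun n => (hbdd n).mono fun x hx => ENNReal.ofReal_le_ofReal hx.2) hC
    _ = ∫ x, limsup (fun n => f n x) atTop ∂μ :=
        (integral_eq_lintegral_of_nonneg_ae (hbdd'.mono fun x hx => (limsup_mem_Icc hx).1)
          (Measurable.limsup hf).aestronglyMeasurable).symm

theorem limsup_le_integral_of_le_integral {ρ : ℝ → ℝ} {u : ℕ → ℝ → ℝ} {a T P M : ℝ}
    (hρ_cont : Continuous ρ) (hρ_mono : Monotone ρ) (hρ_nonneg : ∀ r, 0 ≤ ρ r) (hP : 0 ≤ P)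
    (hmeas : ∀ m, Measurable (u m)) (hbdd : ∀ m, ∀ t ∈ Icc a T, u m t ∈ Icc 0 M)
    (hrec : ∀ m, ∀ t ∈ Icc a T, u (m + 1) t ≤ P * ∫ s in t..T, ρ (u m s)) :
    ∀ t ∈ Icc a T,
      limsup (fun m => u m t) atTop ≤ P * ∫ s in t..T, ρ (limsup (fun m => u m s) atTop) := by
  intro t ht
  set μ := volume.restrict (Ioc t T)
  have hae : ∀ᵐ s ∂μ, s ∈ Icc a T :=
    (ae_restrict_mem measurableSet_Ioc).mono fun s hs => ⟨ht.1.trans hs.1.le, hs.2⟩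
  have hPρ_mono : Monotone fun r => P * ρ r := fun r r' h =>
    mul_le_mul_of_nonneg_left (hρ_mono h) hP
  have hPρ_cont : Continuous fun r => P * ρ r := continuous_const.mul hρ_cont
  have hbdd' : ∀ m, ∀ᵐ s ∂μ, P * ρ (u m s) ∈ Icc 0 (P * ρ M) := fun m =>
    hae.mono fun s hs => ⟨mul_nonneg hP (hρ_nonneg _), hPρ_mono (hbdd m s hs).2⟩
  have hintegral : ∀ g : ℝ → ℝ, P * ∫ s in t..T, ρ (g s) = ∫ s, P * ρ (g s) ∂μ := fun g => by
    rw [intervalIntegral.integral_of_le ht.2, integral_const_mul]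
  calc limsup (fun m => u m t) atTop = limsup (fun m => u (m + 1) t) atTop :=
        (limsup_nat_add _ 1).symm
    _ ≤ limsup (fun m => ∫ s, P * ρ (u m s) ∂μ) atTop := by
        refine limsup_le_limsup (.of_forall fun m => (hrec m t ht).trans_eq (hintegral _))
          (isCoboundedUnder_le_of_le atTop fun m => (hbdd _ t ht).1)
          (isBoundedUnder_of ⟨P * ρ M * μ.real univ, fun m => ?_⟩)
        refine (Real.le_norm_self _).trans
          (norm_integral_le_of_norm_le_const ((hbdd' m).mono fun s hs => ?_))
        exact (Real.norm_of_nonneg hs.1).trans_le hs.2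
    _ ≤ ∫ s, limsup (fun m => P * ρ (u m s)) atTop ∂μ :=
        limsup_integral_le_integral_limsup (fun m => hPρ_cont.measurable.comp (hmeas m)) hbdd'
    _ = ∫ s, P * ρ (limsup (fun m => u m s) atTop) ∂μ := by
        refine integral_congr_ae (hae.mono fun s hs => ?_)
        exact (hPρ_mono.map_limsup_of_continuousAt _ hPρ_cont.continuousAt
          (isBoundedUnder_of ⟨M, fun m => (hbdd m s hs).2⟩)
          (isCoboundedUnder_le_of_le atTop fun m => (hbdd m s hs).1)).symm
    _ = P * ∫ s in t..T, ρ (limsup (fun m => u m s) atTop) := (hintegral _).symm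

theorem integral_inv_comp_le_of_neg_deriv_le {ρ z z' : ℝ → ℝ} {a b P : ℝ} (hab : a ≤ b)
    (hρ : Continuous ρ) (hz : ContinuousOn z (Icc a b))
    (hz_deriv : ∀ t ∈ Ioo a b, HasDerivAt z (z' t) t) (hz' : ContinuousOn z' (Icc a b))
    (hpos : ∀ t ∈ Icc a b, 0 < ρ (z t)) (h : ∀ t ∈ Icc a b, -z' t ≤ P * ρ (z t)) :
    ∫ r in z b..z a, (ρ r)⁻¹ ≤ P * (b - a) := by
  have hsubst : ∫ r in z a..z b, (ρ r)⁻¹ = ∫ t in a..b, (ρ (z t))⁻¹ * z' t := by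
    refine (intervalIntegral.integral_comp_mul_deriv'' (by rwa [uIcc_of_le hab]) ?_
      (by rwa [uIcc_of_le hab]) ?_).symm
    · rw [min_eq_left hab, max_eq_right hab]
      exact fun t ht => (hz_deriv t ht).hasDerivWithinAt
    · rw [uIcc_of_le hab]
      exact hρ.continuousOn.inv₀ fun r ⟨t, ht, hr⟩ => hr ▸ (hpos t ht).ne'
  have hint : IntervalIntegrable (fun t => (ρ (z t))⁻¹ * -z' t) volume a b :=
    ((hρ.comp_continuousOn hz).inv₀ fun t ht => (hpos t ht).ne').mul hz'.neg
      |>.intervalIntegrable_of_Icc hab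
  calc ∫ r in z b..z a, (ρ r)⁻¹ = ∫ t in a..b, (ρ (z t))⁻¹ * -z' t := by
        rw [intervalIntegral.integral_symm, hsubst, ← intervalIntegral.integral_neg]
        simp only [mul_neg]
    _ ≤ ∫ _ in a..b, P := by
        refine intervalIntegral.integral_mono_on hab hint intervalIntegrable_const fun t ht => ?_
        rw [inv_mul_le_iff₀ (hpos t ht), mul_comm]
        exact h t ht
    _ = P * (b - a) := by simp [mul_comm]

theorem integrableOn_Ioc_of_intervalIntegral_le {g : ℝ → ℝ} {c I : ℝ} (hc : 0 < c)
    (hg : ∀ ε ∈ Ioo 0 c, IntegrableOn g (Ioc ε c)) (hg0 : ∀ x ∈ Ioc 0 c, 0 ≤ g x)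
    (h : ∀ ε ∈ Ioo 0 c, ∫ x in ε..c, g x ≤ I) : IntegrableOn g (Ioc 0 c) := by
  have hmem : ∀ n : ℕ, c / (n + 2) ∈ Ioo 0 c := fun n =>
    ⟨by positivity, div_lt_self hc (by linarith [n.cast_nonneg (α := ℝ)])⟩
  have hlim : Tendsto (fun n : ℕ => c / (n + 2)) atTop (𝓝 0) := by
    simpa [Function.comp_def] using
      (tendsto_const_div_atTop_nhds_zero_nat c).comp (tendsto_add_atTop_nat 2)
  refine integrableOn_Ioc_of_intervalIntegral_norm_bounded_left (I := I)
    (fun n => hg _ (hmem n)) hlim (.of_forall fun n => ?_)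
  rw [← intervalIntegral.integral_of_le (hmem n).2.le]
  refine (intervalIntegral.integral_congr fun x hx => ?_).trans_le (h _ (hmem n))
  rw [uIcc_of_le (hmem n).2.le] at hx
  exact Real.norm_of_nonneg (hg0 x ⟨(hmem n).1.trans_le hx.1, hx.2⟩)

theorem continuousOn_mul_integral_Icc {f : ℝ → ℝ} {a b P : ℝ} (hab : a ≤ b)
    (hf : IntegrableOn f (Icc a b)) : ContinuousOn (fun t => P * ∫ s in t..b, f s) (Icc a b) := by
  have := intervalIntegral.continuousOn_primitive_interval_left (by rwa [uIcc_of_le hab])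
  rw [uIcc_of_le hab] at this
  exact this.const_smul P

theorem eq_zero_of_le_integral_of_continuousOn {ρ f : ℝ → ℝ} {a T P : ℝ}
    (hρ_cont : Continuous ρ) (hρ_mono : Monotone ρ) (hρ_nonneg : ∀ r, 0 ≤ ρ r)
    (hρ_pos : ∀ r > 0, 0 < ρ r) (hρ_div : ∀ ε > 0, ¬ IntegrableOn (fun r => (ρ r)⁻¹) (Ioc 0 ε))
    (hP : 0 ≤ P) (hf : ContinuousOn f (Icc a T)) (hf0 : ∀ t ∈ Icc a T, 0 ≤ f t)
    (hle : ∀ t ∈ Icc a T, f t ≤ P * ∫ s in t..T, ρ (f s)) :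
    ∀ t ∈ Icc a T, f t = 0 := by
  intro t₀ ht₀
  set z : ℝ → ℝ := fun t => P * ∫ s in t..T, ρ (f s)
  have hsub : Icc t₀ T ⊆ Icc a T := Icc_subset_Icc_left ht₀.1
  have hρf : ContinuousOn (fun s => ρ (f s)) (Icc t₀ T) :=
    hρ_cont.comp_continuousOn (hf.mono hsub)
  have hz_cont : ContinuousOn z (Icc t₀ T) :=
    continuousOn_mul_integral_Icc ht₀.2 hρf.integrableOn_Icc
  have hz_deriv : ∀ t ∈ Ioo t₀ T, HasDerivAt z (-(P * ρ (f t))) t := fun t ht => by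
    simpa using (intervalIntegral.integral_hasDerivAt_left
      (ContinuousOn.intervalIntegrable_of_Icc ht.2.le (hρf.mono (Icc_subset_Icc_left ht.1.le)))
      ((hρf.mono Ioo_subset_Icc_self).stronglyMeasurableAtFilter isOpen_Ioo t ht)
      (hρf.continuousAt (Icc_mem_nhds ht.1 ht.2))).const_mul P
  have hz0 : ∀ t ∈ Icc t₀ T, 0 ≤ z t := fun t ht =>
    mul_nonneg hP (intervalIntegral.integral_nonneg ht.2 fun s _ => hρ_nonneg _)
  have hzT : z T = 0 := by simp [z]
  suffices z t₀ ≤ 0 by linarith [hle t₀ ht₀, hf0 t₀ ht₀]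
  by_contra! hc
  have hinv : ∀ ε > 0, ∀ b, ContinuousOn (fun r => (ρ r)⁻¹) (Icc ε b) := fun ε hε b =>
    hρ_cont.continuousOn.inv₀ fun r hr => (hρ_pos r (hε.trans_le hr.1)).ne'
  refine hρ_div _ hc (integrableOn_Ioc_of_intervalIntegral_le (I := P * (T - t₀)) hc
    (fun ε hε => ((hinv ε hε.1 _).integrableOn_Icc).mono_set Ioc_subset_Icc_self)
    (fun r hr => (inv_pos.2 (hρ_pos r hr.1)).le) fun ε ⟨hε, hεc⟩ => ?_)
  -- Shifting `z` by `ε` keeps `ρ` positive along the substitution `r = z t + ε`.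
  calc ∫ r in ε..z t₀, (ρ r)⁻¹ ≤ ∫ r in z T + ε..z t₀ + ε, (ρ r)⁻¹ := by
        rw [hzT, zero_add]
        exact intervalIntegral.integral_mono_interval le_rfl hεc.le (by linarith)
          (ae_of_all _ fun r => inv_nonneg.2 (hρ_nonneg r))
          ((hinv ε hε _).intervalIntegrable_of_Icc (by linarith))
    _ ≤ P * (T - t₀) := by
        refine integral_inv_comp_le_of_neg_deriv_le (z := fun t => z t + ε) ht₀.2 hρ_cont
          (hz_cont.add continuousOn_const) (fun t ht => (hz_deriv t ht).add_const ε)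
          (hρf.const_smul P).neg (fun t ht => hρ_pos _ (by linarith [hz0 t ht]))
          fun t ht => ?_
        have hfz : f t ≤ z t := hle t (hsub ht)
        rw [neg_neg]
        exact mul_le_mul_of_nonneg_left (hρ_mono (by linarith)) hP

theorem eq_zero_of_le_integral {ρ f : ℝ → ℝ} {a T P : ℝ} (hρ_cont : Continuous ρ)
    (hρ_mono : Monotone ρ) (hρ_nonneg : ∀ r, 0 ≤ ρ r) (hρ_pos : ∀ r > 0, 0 < ρ r)
    (hρ_div : ∀ ε > 0, ¬ IntegrableOn (fun r => (ρ r)⁻¹) (Ioc 0 ε)) (hP : 0 ≤ P)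
    (hf : IntervalIntegrable (fun s => ρ (f s)) volume a T) (hf0 : ∀ t ∈ Icc a T, 0 ≤ f t)
    (hle : ∀ t ∈ Icc a T, f t ≤ P * ∫ s in t..T, ρ (f s)) :
    ∀ t ∈ Icc a T, f t = 0 := by
  intro t₀ ht₀
  set g : ℝ → ℝ := fun t => P * ∫ s in t..T, ρ (f s)
  have haT : a ≤ T := ht₀.1.trans ht₀.2
  have hg_cont : ContinuousOn g (Icc a T) :=
    continuousOn_mul_integral_Icc haT ((intervalIntegrable_iff_integrableOn_Icc_of_le haT).1 hf)
  have hg0 : ∀ t ∈ Icc a T, 0 ≤ g t := fun t ht =>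
    mul_nonneg hP (intervalIntegral.integral_nonneg ht.2 fun s _ => hρ_nonneg _)
  have hg_le : ∀ t ∈ Icc a T, g t ≤ P * ∫ s in t..T, ρ (g s) := fun t ht => by
    refine mul_le_mul_of_nonneg_left (intervalIntegral.integral_mono_on ht.2
      (hf.mono_set ?_) ?_ fun s hs => hρ_mono (hle s ⟨ht.1.trans hs.1, hs.2⟩)) hP
    · rw [uIcc_of_le ht.2, uIcc_of_le haT]
      exact Icc_subset_Icc_left ht.1
    · exact ((hρ_cont.comp_continuousOn hg_cont).mono (Icc_subset_Icc_left ht.1))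
        |>.intervalIntegrable_of_Icc ht.2
  have hg_zero := eq_zero_of_le_integral_of_continuousOn hρ_cont hρ_mono hρ_nonneg hρ_pos
    hρ_div hP hg_cont hg0 hg_le t₀ ht₀
  linarith [hle t₀ ht₀, hf0 t₀ ht₀]

theorem intervalIntegrable_of_norm_le {f : ℝ → ℝ} {a b C : ℝ} (hab : a ≤ b) (hf : Measurable f)
    (h : ∀ s ∈ Icc a b, ‖f s‖ ≤ C) : IntervalIntegrable f volume a b :=
  (intervalIntegrable_iff_integrableOn_Icc_of_le hab).2 <|
    Measure.integrableOn_of_bounded measure_Icc_lt_top.ne hf.aestronglyMeasurable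
      ((ae_restrict_mem measurableSet_Icc).mono h)

theorem ContinuousOn.continuous_comp_max {ρ : ℝ → ℝ} {c : ℝ} (hρ : ContinuousOn ρ (Ici c)) :
    Continuous fun r => ρ (max r c) :=
  hρ.comp_continuous (continuous_id.max continuous_const) fun r => le_max_right r c

theorem MonotoneOn.monotone_comp_max {ρ : ℝ → ℝ} {c : ℝ} (hρ : MonotoneOn ρ (Ici c)) :
    Monotone fun r => ρ (max r c) := fun r s h =>
  hρ (le_max_right r c) (le_max_right s c) (max_le_max_right c h)

theorem stmt_9_general (T P : ℝ) (hT : 0 < T) (hP : 0 < P)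
    (ρ : ℝ → ℝ)
    (hρ_cont : ContinuousOn ρ (Ici 0))
    (hρ_mono : MonotoneOn ρ (Ici 0))
    (hρ0 : ρ 0 = 0)
    (hρ_pos : ∀ r > (0:ℝ), 0 < ρ r)
    (hρ_div : ∀ ε > (0:ℝ), ¬ IntegrableOn (fun r => 1 / ρ r) (Ioc 0 ε) volume)
    (u : ℕ → ℝ → ℝ)
    (hmeas : ∀ m, Measurable (u m))
    (hnonneg : ∀ m, ∀ t ∈ Icc 0 T, 0 ≤ u m t)
    (M : ℝ) (hbdd : ∀ m, ∀ t ∈ Icc 0 T, u m t ≤ M)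
    (hrec : ∀ m : ℕ, ∀ t ∈ Icc 0 T, u (m + 1) t ≤ P * ∫ s in t..T, ρ (u m s))
    (α : ℝ → ℝ) (hα : ∀ t, α t = limsup (fun m => u m t) atTop) :
    (∀ t ∈ Icc 0 T, α t ≤ P * ∫ s in t..T, ρ (α s)) ∧
    (∀ t ∈ Icc 0 T, α t = 0) := by
  set ρ' : ℝ → ℝ := fun r => ρ (max r 0)
  have hρ'_cont : Continuous ρ' := hρ_cont.continuous_comp_max
  have hρ'_mono : Monotone ρ' := hρ_mono.monotone_comp_max
  have hρ'_eq : ∀ r, 0 ≤ r → ρ' r = ρ r := fun r hr => congrArg ρ (max_eq_left hr)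
  have hρ'_nonneg : ∀ r, 0 ≤ ρ' r := fun r =>
    hρ0 ▸ hρ_mono (mem_Ici.2 le_rfl) (le_max_right r 0) (le_max_right r 0)
  have hρ'_pos : ∀ r > 0, 0 < ρ' r := fun r hr => (hρ'_eq r hr.le).symm ▸ hρ_pos r hr
  have hρ'_div : ∀ ε > 0, ¬ IntegrableOn (fun r => (ρ' r)⁻¹) (Ioc 0 ε) := fun ε hε hint =>
    hρ_div ε hε (hint.congr_fun (fun r hr => by simp [hρ'_eq r hr.1.le]) measurableSet_Ioc)
  have hcongr : ∀ g : ℝ → ℝ, (∀ s ∈ Icc 0 T, 0 ≤ g s) → ∀ t ∈ Icc 0 T,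
      ∫ s in t..T, ρ' (g s) = ∫ s in t..T, ρ (g s) := fun g hg t ht =>
    intervalIntegral.integral_congr fun s hs => by
      rw [uIcc_of_le ht.2] at hs
      exact hρ'_eq _ (hg s ⟨ht.1.trans hs.1, hs.2⟩)
  have hu : ∀ m, ∀ t ∈ Icc 0 T, u m t ∈ Icc 0 M := fun m t ht => ⟨hnonneg m t ht, hbdd m t ht⟩
  have hα_eq : α = fun t => limsup (fun m => u m t) atTop := funext hα
  have hα_mem : ∀ t ∈ Icc 0 T, α t ∈ Icc 0 M := fun t ht =>
    hα t ▸ limsup_mem_Icc fun m => hu m t ht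
  have hlim : ∀ t ∈ Icc 0 T, α t ≤ P * ∫ s in t..T, ρ' (α s) := hα_eq ▸
    limsup_le_integral_of_le_integral hρ'_cont hρ'_mono hρ'_nonneg hP.le hmeas hu fun m t ht =>
      (hrec m t ht).trans_eq (by rw [hcongr _ (fun s hs => (hu m s hs).1) t ht])
  have hα_int : IntervalIntegrable (fun s => ρ' (α s)) volume 0 T :=
    intervalIntegrable_of_norm_le hT.le (hρ'_cont.measurable.comp (hα_eq ▸ .limsup hmeas))
      fun s hs => (Real.norm_of_nonneg (hρ'_nonneg _)).trans_le (hρ'_mono (hα_mem s hs).2)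
  exact ⟨fun t ht => (hlim t ht).trans_eq (by rw [hcongr _ (fun s hs => (hα_mem s hs).1) t ht]),
    eq_zero_of_le_integral hρ'_cont hρ'_mono hρ'_nonneg hρ'_pos hρ'_div hP.le hα_int
      (fun t ht => (hα_mem t ht).1) hlim⟩

theorem stmt_9 (T P : ℝ) (hT : 0 < T) (hP : 0 < P)
    (ρ : ℝ → ℝ)
    (hρ_cont : ContinuousOn ρ (Ici 0))
    (hρ_mono : MonotoneOn ρ (Ici 0))
    (hρ_concave : ∀ x ∈ Ici (0:ℝ), ∀ y ∈ Ici (0:ℝ), ∀ t ∈ Icc (0:ℝ) 1,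
      t * ρ x + (1 - t) * ρ y ≤ ρ (t * x + (1 - t) * y))
    (hρ0 : ρ 0 = 0)
    (hρ_pos : ∀ r > (0:ℝ), 0 < ρ r)
    (hρ_div : ∀ ε > (0:ℝ), ¬ IntegrableOn (fun r => 1 / ρ r) (Ioc 0 ε) volume)
    (u : ℕ → ℝ → ℝ)
    (hmeas : ∀ m, Measurable (u m))
    (hnonneg : ∀ m, ∀ t ∈ Icc 0 T, 0 ≤ u m t)
    (M : ℝ) (hbdd : ∀ m, ∀ t ∈ Icc 0 T, u m t ≤ M)
    (hrec : ∀ m : ℕ, ∀ t ∈ Icc 0 T, u (m + 1) t ≤ P * ∫ s in t..T, ρ (u m s))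
    (α : ℝ → ℝ) (hα : ∀ t, α t = limsup (fun m => u m t) atTop) :
    (∀ t ∈ Icc 0 T, α t ≤ P * ∫ s in t..T, ρ (α s)) ∧
    (∀ t ∈ Icc 0 T, α t = 0) :=
  stmt_9_general T P hT hP ρ hρ_cont hρ_mono hρ0 hρ_pos hρ_div u hmeas hnonneg M hbdd hrec α hα
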